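/- arXiv:2406.01525 — 4 statements merged into one kernel-verified Lean document; each statement's English description precedes it below -/
import Mathlib

section
/- Fix k ≥ 1. For each pair (i₀, i₁) with 0 ≤ i₀ < i₁ ≤ 2^k, the number of pairs (l, d) with 1 ≤ l ≤ k, 0 ≤ d ≤ 2^{k−l} − 1, such that either (i₀ = d·2^l and i₁ = d·2^l + 2^{l−1}) or (i₀ = d·2^l and i₁ = d·2^l + 2^l), is at most 2. -/
/-! A pair `(l, d)` counted here has `i₁ - i₀ = 2 ^ (l - 1)` or `i₁ - i₀ = 2 ^ l`, so `l` is
`log₂ (i₁ - i₀) + 1` or `log₂ (i₁ - i₀)`; and `d = i₀ / 2 ^ l` is determined by `l`.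
So the projection `(l, d) ↦ l` is injective on the counted pairs and takes at most two values. -/

theorem Nat.log_two_sub_of_eq_add_two_pow {a b e : ℕ} (h : b = a + 2 ^ e) :
    Nat.log 2 (b - a) = e := by
  rw [h, Nat.add_sub_cancel_left, Nat.log_pow Nat.one_lt_two]

theorem stride_eq_log_sub_add_one_or_eq_log_sub {l d i₀ i₁ : ℕ} (hl : 1 ≤ l)
    (h : (i₀ = d * 2 ^ l ∧ i₁ = d * 2 ^ l + 2 ^ (l - 1)) ∨
      (i₀ = d * 2 ^ l ∧ i₁ = d * 2 ^ l + 2 ^ l)) :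
    l = Nat.log 2 (i₁ - i₀) + 1 ∨ l = Nat.log 2 (i₁ - i₀) := by
  rcases h with ⟨rfl, h_half⟩ | ⟨rfl, h_full⟩
  · left
    rw [Nat.log_two_sub_of_eq_add_two_pow h_half]
    omega
  · right
    rw [Nat.log_two_sub_of_eq_add_two_pow h_full]

theorem pair_appears_at_most_twice_general (k : ℕ) (i₀ i₁ : ℕ) :
    ((Finset.Icc 1 k ×ˢ Finset.range (2 ^ k)).filter (fun p =>
        p.2 ≤ 2 ^ (k - p.1) - 1 ∧
        ((i₀ = p.2 * 2 ^ p.1 ∧ i₁ = p.2 * 2 ^ p.1 + 2 ^ (p.1 - 1)) ∨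
         (i₀ = p.2 * 2 ^ p.1 ∧ i₁ = p.2 * 2 ^ p.1 + 2 ^ p.1)))).card ≤ 2 := by
  set m := Nat.log 2 (i₁ - i₀)
  refine (Finset.card_le_card_of_injOn Prod.fst (t := {m + 1, m}) ?_ ?_).trans Finset.card_le_two
  · intro p hp
    simp only [Finset.coe_filter, Finset.mem_product, Finset.mem_Icc, Set.mem_ofPred_eq] at hp
    simpa using stride_eq_log_sub_add_one_or_eq_log_sub hp.1.1.1 hp.2.2
  · intro p hp q hq hpq
    simp only [Finset.coe_filter, Set.mem_ofPred_eq] at hp hq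
    have hp' := Nat.div_eq_of_eq_mul_left (by positivity) (hp.2.2.elim And.left And.left)
    have hq' := Nat.div_eq_of_eq_mul_left (by positivity) (hq.2.2.elim And.left And.left)
    exact Prod.ext hpq (by rw [← hp', ← hq', hpq])

theorem pair_appears_at_most_twice (k : ℕ) (hk : 1 ≤ k) (i₀ i₁ : ℕ)
    (h01 : i₀ < i₁) (h1 : i₁ ≤ 2 ^ k) :
    ((Finset.Icc 1 k ×ˢ Finset.range (2 ^ k)).filter (fun p =>
        p.2 ≤ 2 ^ (k - p.1) - 1 ∧
        ((i₀ = p.2 * 2 ^ p.1 ∧ i₁ = p.2 * 2 ^ p.1 + 2 ^ (p.1 - 1)) ∨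
         (i₀ = p.2 * 2 ^ p.1 ∧ i₁ = p.2 * 2 ^ p.1 + 2 ^ p.1)))).card ≤ 2 :=
  pair_appears_at_most_twice_general k i₀ i₁
end

section
/- For k ≥ 7, define f_k : Bool^{2^k} → Bool by f_k(X) = (Y₀ = Z₀) ∧ (Y₁ = Z₁) ∧ (Y₂ = Z₂), where Y₀ = X[2^{k−1}−k, 2^{k−1}), Z₀ = X[2^{k−1}, 2^{k−1}+k), Y₁ = X[(5/8)·2^k − k, (5/8)·2^k), Z₁ = X[(5/8)·2^k, (5/8)·2^k + k), Y₂ = X[(3/4)·2^k − k, (3/4)·2^k), Z₂ = X[(3/4)·2^k, (3/4)·2^k + k). Then the number of distinct residual functions of f_k obtained by fixing the first 2^{k−1} variables is at least 2^k. -/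
/-- The set of residual functions of `f` obtained by fixing the first `d`
variables. -/
def residualSet (n : ℕ) {V : Type} (f : (Fin n → Bool) → V) (d : ℕ) :
    Set ((Fin (n - d) → Bool) → V) :=
  {g | ∃ a : Fin d → Bool, g = fun y =>
    f (fun i => if h : (i : ℕ) < d then a ⟨i, h⟩
                else y ⟨(i : ℕ) - d, by have := i.2; omega⟩)}

/-- The tight-instance function `f_k`: it checks equality of three pairs of
`k`-bit blocks located around depths 1/2, 5/8, and 3/4 of the input. -/
def fk (k : ℕ) (X : Fin (2 ^ k) → Bool) : Bool :=
  let X' : ℕ → Bool := fun i => if h : i < 2 ^ k then X ⟨i, h⟩ else false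
  decide ((∀ j < k, X' (2 ^ (k - 1) - k + j) = X' (2 ^ (k - 1) + j)) ∧
          (∀ j < k, X' (5 * 2 ^ k / 8 - k + j) = X' (5 * 2 ^ k / 8 + j)) ∧
          (∀ j < k, X' (3 * 2 ^ k / 4 - k + j) = X' (3 * 2 ^ k / 4 + j)))

def Vf (k : ℕ) (v : Fin k → Bool) : ℕ → Bool := fun j => if h : j < k then v ⟨j, h⟩ else false

def glue (k : ℕ) (v w : Fin k → Bool) : Fin (2 ^ k) → Bool :=
  fun i => if (i : ℕ) < 2 ^ (k - 1) then Vf k w ((i : ℕ) - (2 ^ (k - 1) - k))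
           else Vf k v ((i : ℕ) - 2 ^ (k - 1))

lemma aux2 (m : ℕ) : 2 * (m + 7) ≤ 2 ^ (m + 4) := by
  induction m with
  | zero => norm_num
  | succ n ih => rw [show n + 1 + 4 = (n + 4) + 1 by omega, pow_succ]; omega

lemma h2k (k : ℕ) (hk : 7 ≤ k) : 2 * k ≤ 2 ^ (k - 3) := by
  have := aux2 (k - 7)
  have e1 : k - 7 + 7 = k := by omega
  have e2 : k - 7 + 4 = k - 3 := by omega
  rw [e1, e2] at this; exact this

lemma hn (k : ℕ) (hk : 7 ≤ k) : (2 : ℕ) ^ k = 8 * 2 ^ (k - 3) := by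
  have h3 : k - 3 + 3 = k := by omega
  calc (2 : ℕ) ^ k = 2 ^ (k - 3 + 3) := by rw [h3]
    _ = 2 ^ (k - 3) * 2 ^ 3 := pow_add 2 _ _
    _ = 8 * 2 ^ (k - 3) := by ring

lemma hd (k : ℕ) (hk : 7 ≤ k) : (2 : ℕ) ^ (k - 1) = 4 * 2 ^ (k - 3) := by
  have h3 : k - 3 + 2 = k - 1 := by omega
  calc (2 : ℕ) ^ (k - 1) = 2 ^ (k - 3 + 2) := by rw [h3]
    _ = 2 ^ (k - 3) * 2 ^ 2 := pow_add 2 _ _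
    _ = 4 * 2 ^ (k - 3) := by ring

lemma Xval (k : ℕ) (v w : Fin k → Bool) (i : ℕ) (hi : i < 2 ^ k) :
    (if h : i < 2 ^ k then glue k v w ⟨i, h⟩ else false)
      = if i < 2 ^ (k - 1) then Vf k w (i - (2 ^ (k - 1) - k))
        else Vf k v (i - 2 ^ (k - 1)) := by
  rw [dif_pos hi]; rfl

lemma Vf_ge (k : ℕ) (v : Fin k → Bool) (j : ℕ) (hj : k ≤ j) : Vf k v j = false := by
  rw [Vf]; exact dif_neg (by omega)

lemma fk_glue (k : ℕ) (hk : 7 ≤ k) (v w : Fin k → Bool) :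
    fk k (glue k v w) = decide (∀ j < k, Vf k w j = Vf k v j) := by
  have h2k := h2k k hk
  have hn := hn k hk
  have hd := hd k hk
  have h58 : 5 * 2 ^ k / 8 = 5 * 2 ^ (k - 3) := by omega
  have h34 : 3 * 2 ^ k / 4 = 6 * 2 ^ (k - 3) := by omega
  unfold fk
  simp only []
  rw [decide_eq_decide]
  have hY0 : ∀ j < k, (if h : 2 ^ (k - 1) - k + j < 2 ^ k then
      glue k v w ⟨2 ^ (k - 1) - k + j, h⟩ else false) = Vf k w j := by
    intro j hj
    rw [Xval k v w _ (by omega), if_pos (by omega),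
      show 2 ^ (k - 1) - k + j - (2 ^ (k - 1) - k) = j by omega]
  have hZ0 : ∀ j < k, (if h : 2 ^ (k - 1) + j < 2 ^ k then
      glue k v w ⟨2 ^ (k - 1) + j, h⟩ else false) = Vf k v j := by
    intro j hj
    rw [Xval k v w _ (by omega), if_neg (by omega),
      show 2 ^ (k - 1) + j - 2 ^ (k - 1) = j by omega]
  have hY1 : ∀ j < k, (if h : 5 * 2 ^ k / 8 - k + j < 2 ^ k then
      glue k v w ⟨5 * 2 ^ k / 8 - k + j, h⟩ else false) = false := by
    intro j hj
    rw [Xval k v w _ (by omega), if_neg (by omega)]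
    exact Vf_ge k v _ (by omega)
  have hZ1 : ∀ j < k, (if h : 5 * 2 ^ k / 8 + j < 2 ^ k then
      glue k v w ⟨5 * 2 ^ k / 8 + j, h⟩ else false) = false := by
    intro j hj
    rw [Xval k v w _ (by omega), if_neg (by omega)]
    exact Vf_ge k v _ (by omega)
  have hY2 : ∀ j < k, (if h : 3 * 2 ^ k / 4 - k + j < 2 ^ k then
      glue k v w ⟨3 * 2 ^ k / 4 - k + j, h⟩ else false) = false := by
    intro j hj
    rw [Xval k v w _ (by omega), if_neg (by omega)]
    exact Vf_ge k v _ (by omega)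
  have hZ2 : ∀ j < k, (if h : 3 * 2 ^ k / 4 + j < 2 ^ k then
      glue k v w ⟨3 * 2 ^ k / 4 + j, h⟩ else false) = false := by
    intro j hj
    rw [Xval k v w _ (by omega), if_neg (by omega)]
    exact Vf_ge k v _ (by omega)
  constructor
  · rintro ⟨h1, -, -⟩ j hj
    have := h1 j hj
    rwa [hY0 j hj, hZ0 j hj] at this
  · intro h1
    refine ⟨fun j hj => by rw [hY0 j hj, hZ0 j hj]; exact h1 j hj,
            fun j hj => by rw [hY1 j hj, hZ1 j hj],
            fun j hj => by rw [hY2 j hj, hZ2 j hj]⟩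

def av (k : ℕ) (v : Fin k → Bool) : Fin (2 ^ (k - 1)) → Bool :=
  fun i => Vf k v ((i : ℕ) - (2 ^ (k - 1) - k))

def Ff (k : ℕ) (v : Fin k → Bool) : (Fin (2 ^ k - 2 ^ (k - 1)) → Bool) → Bool :=
  fun y => fk k (fun i => if h : (i : ℕ) < 2 ^ (k - 1) then av k v ⟨i, h⟩
    else y ⟨(i : ℕ) - 2 ^ (k - 1), by have := i.2; omega⟩)

lemma Ff_mem (k : ℕ) (v : Fin k → Bool) :
    Ff k v ∈ residualSet (2 ^ k) (fk k) (2 ^ (k - 1)) := ⟨av k v, rfl⟩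

lemma Ff_glue (k : ℕ) (u v : Fin k → Bool) :
    Ff k u (fun j => Vf k v (j : ℕ)) = fk k (glue k v u) := by
  rfl

lemma Ff_inj (k : ℕ) (hk : 7 ≤ k) : Function.Injective (Ff k) := by
  intro u u' he
  have h1 := congrFun he (fun j => Vf k u (j : ℕ))
  rw [Ff_glue k u u, Ff_glue k u' u, fk_glue k hk, fk_glue k hk] at h1
  have h2 : ∀ j < k, Vf k u' j = Vf k u j := by
    have : (decide (∀ j < k, Vf k u j = Vf k u j)) = true := by simp
    rw [this] at h1
    exact of_decide_eq_true h1.symm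
  funext j
  have := h2 (j : ℕ) j.2
  simpa [Vf, j.2] using this.symm

theorem fk_residuals_at_half_depth (k : ℕ) (hk : 7 ≤ k) :
    2 ^ k ≤ (residualSet (2 ^ k) (fk k) (2 ^ (k - 1))).ncard := by
  have hrange : Set.range (Ff k) ⊆ residualSet (2 ^ k) (fk k) (2 ^ (k - 1)) := by
    rintro g ⟨v, rfl⟩; exact Ff_mem k v
  have hcard : (Set.range (Ff k)).ncard = 2 ^ k := by
    rw [← Nat.card_coe_set_eq, Nat.card_range_of_injective (Ff_inj k hk)]
    simp [Nat.card_eq_fintype_card]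
  calc 2 ^ k = (Set.range (Ff k)).ncard := hcard.symm
    _ ≤ _ := Set.ncard_le_ncard hrange (Set.toFinite _)
end

section
/- Suppose for each level l ∈ {1,…,k} and each node u of B at a depth d that is a multiple of 2^l, the grouping Φ(u,l) has at most D(d + 2^{l−1}) middle vertices and at most D(d + 2^l) exit vertices, and suppose Φ is onto the set of groupings at each level. Then the total number of middle and exit vertices over all groupings at levels 1..k is at most ∑_{l=1}^{k} ∑_{d=0}^{2^{k−l}−1} D(d·2^l)·(D(d·2^l + 2^{l−1}) + D(d·2^l + 2^l)), which is at most (∑_{i=0}^{2^k} D(i))². -/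
lemma aux_surj_sum {α β : Type*} [Fintype α] [Fintype β] (f : α → β)
    (hf : Function.Surjective f) (g : β → ℕ) :
    ∑ b : β, g b ≤ ∑ a : α, g (f a) := by
  classical
  set s := Function.surjInv hf with hs
  have hsec : ∀ b, f (s b) = b := Function.surjInv_eq hf
  have hinj : Function.Injective s := Function.injective_surjInv hf
  calc ∑ b : β, g b = ∑ b : β, g (f (s b)) := by simp [hsec]
    _ = ∑ a ∈ Finset.univ.image s, g (f a) := by
        rw [Finset.sum_image (fun x _ y _ h => hinj h)]
    _ ≤ ∑ a : α, g (f a) := Finset.sum_le_sum_of_subset (Finset.subset_univ _)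

lemma aux_pairs (D : ℕ → ℕ) (n : ℕ) :
    2 * ∑ i ∈ Finset.range n, ∑ j ∈ Finset.range n,
        (if i < j then D i * D j else 0) ≤ (∑ i ∈ Finset.range n, D i) ^ 2 := by
  have hswap : ∑ i ∈ Finset.range n, ∑ j ∈ Finset.range n, (if i < j then D i * D j else 0)
      = ∑ i ∈ Finset.range n, ∑ j ∈ Finset.range n, (if j < i then D i * D j else 0) := by
    rw [Finset.sum_comm]
    apply Finset.sum_congr rfl; intro i _
    apply Finset.sum_congr rfl; intro j _
    simp [mul_comm]
  rw [two_mul]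
  nth_rewrite 2 [hswap]
  rw [← Finset.sum_add_distrib]
  have : ∀ i ∈ Finset.range n, (∑ j ∈ Finset.range n, (if i < j then D i * D j else 0))
      + (∑ j ∈ Finset.range n, (if j < i then D i * D j else 0))
      ≤ ∑ j ∈ Finset.range n, D i * D j := by
    intro i _
    rw [← Finset.sum_add_distrib]
    apply Finset.sum_le_sum
    intro j _
    rcases lt_trichotomy i j with h | h | h
    · simp [h, not_lt.mpr h.le]
    · simp [h]
    · simp [h, not_lt.mpr h.le]
  calc _ ≤ ∑ i ∈ Finset.range n, ∑ j ∈ Finset.range n, D i * D j := Finset.sum_le_sum this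
    _ = (∑ i ∈ Finset.range n, D i) ^ 2 := by rw [sq, Finset.sum_mul_sum]

theorem vertex_total_bound (k : ℕ) (hk : 1 ≤ k)
    {B : Type*} [Fintype B] [DecidableEq B] (depth : B → ℕ)
    (hdepth : ∀ u, depth u ≤ 2 ^ k)
    (D : ℕ → ℕ)
    (hD : ∀ d, D d = (Finset.univ.filter (fun u : B => depth u = d)).card)
    (Glev : ℕ → Type*) [∀ l, Fintype (Glev l)]
    (mid exi : ∀ l, Glev l → ℕ)
    (Φ : ∀ l, {u : B // 2 ^ l ∣ depth u ∧ depth u < 2 ^ k} → Glev l)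
    (hsurj : ∀ l ∈ Finset.Icc 1 k, Function.Surjective (Φ l))
    (hmid : ∀ l ∈ Finset.Icc 1 k,
      ∀ u : {u : B // 2 ^ l ∣ depth u ∧ depth u < 2 ^ k},
        mid l (Φ l u) ≤ D (depth u.1 + 2 ^ (l - 1)))
    (hexit : ∀ l ∈ Finset.Icc 1 k,
      ∀ u : {u : B // 2 ^ l ∣ depth u ∧ depth u < 2 ^ k},
        exi l (Φ l u) ≤ D (depth u.1 + 2 ^ l)) :
    (∑ l ∈ Finset.Icc 1 k, ∑ g : Glev l, (mid l g + exi l g)) ≤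
      (∑ l ∈ Finset.Icc 1 k, ∑ d ∈ Finset.range (2 ^ (k - l)),
        D (d * 2 ^ l) * (D (d * 2 ^ l + 2 ^ (l - 1)) + D (d * 2 ^ l + 2 ^ l))) ∧
    (∑ l ∈ Finset.Icc 1 k, ∑ d ∈ Finset.range (2 ^ (k - l)),
        D (d * 2 ^ l) * (D (d * 2 ^ l + 2 ^ (l - 1)) + D (d * 2 ^ l + 2 ^ l))) ≤
      (∑ i ∈ Finset.range (2 ^ k + 1), D i) ^ 2 := by
  classical
  have hpow : ∀ l, l ≤ k → 2 ^ (k - l) * 2 ^ l = 2 ^ k := by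
    intro l hl
    rw [← pow_add, Nat.sub_add_cancel hl]
  constructor
  · -- Part 1
    apply Finset.sum_le_sum
    intro l hl
    have hlk : l ≤ k := (Finset.mem_Icc.mp hl).2
    calc ∑ g : Glev l, (mid l g + exi l g)
        ≤ ∑ u : {u : B // 2 ^ l ∣ depth u ∧ depth u < 2 ^ k},
            (mid l (Φ l u) + exi l (Φ l u)) :=
          aux_surj_sum (Φ l) (hsurj l hl) _
      _ ≤ ∑ u : {u : B // 2 ^ l ∣ depth u ∧ depth u < 2 ^ k},
            (D (depth u.1 + 2 ^ (l - 1)) + D (depth u.1 + 2 ^ l)) :=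
          Finset.sum_le_sum (fun u _ => add_le_add (hmid l hl u) (hexit l hl u))
      _ = ∑ d ∈ Finset.range (2 ^ (k - l)),
            D (d * 2 ^ l) * (D (d * 2 ^ l + 2 ^ (l - 1)) + D (d * 2 ^ l + 2 ^ l)) := by
          have hmap : ∀ u : {u : B // 2 ^ l ∣ depth u ∧ depth u < 2 ^ k},
              u ∈ (Finset.univ : Finset _) → depth u.1 / 2 ^ l ∈ Finset.range (2 ^ (k - l)) := by
            intro u _
            rw [Finset.mem_range, Nat.div_lt_iff_lt_mul (pow_pos two_pos l), hpow l hlk]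
            exact u.2.2
          rw [← Finset.sum_fiberwise_of_maps_to hmap]
          apply Finset.sum_congr rfl
          intro d hd
          have hdepths : ∀ u : {u : B // 2 ^ l ∣ depth u ∧ depth u < 2 ^ k},
              depth u.1 / 2 ^ l = d → depth u.1 = d * 2 ^ l := by
            intro u h
            rw [← h, Nat.div_mul_cancel u.2.1]
          have hcard : (Finset.univ.filter
              (fun u : {u : B // 2 ^ l ∣ depth u ∧ depth u < 2 ^ k} =>
                depth u.1 / 2 ^ l = d)).card = D (d * 2 ^ l) := by
            rw [hD]
            apply Finset.card_bij (fun u _ => u.1)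
            · intro u hu
              simp only [Finset.mem_filter, Finset.mem_univ, true_and] at hu ⊢
              exact hdepths u hu
            · intro u hu v hv h
              exact Subtype.ext h
            · intro b hb
              simp only [Finset.mem_filter, Finset.mem_univ, true_and] at hb
              have hlt : depth b < 2 ^ k := by
                rw [hb, ← hpow l hlk]
                exact (Nat.mul_lt_mul_right (pow_pos two_pos l)).mpr (Finset.mem_range.mp hd)
              refine ⟨⟨b, ⟨Dvd.intro_left d (hb ▸ rfl), hlt⟩⟩, ?_, rfl⟩
              simp only [Finset.mem_filter, Finset.mem_univ, true_and]
              rw [hb, Nat.mul_div_cancel _ (pow_pos two_pos l)]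
          calc ∑ u ∈ Finset.univ.filter
                (fun u : {u : B // 2 ^ l ∣ depth u ∧ depth u < 2 ^ k} =>
                  depth u.1 / 2 ^ l = d),
                (D (depth u.1 + 2 ^ (l - 1)) + D (depth u.1 + 2 ^ l))
              = ∑ u ∈ Finset.univ.filter
                (fun u : {u : B // 2 ^ l ∣ depth u ∧ depth u < 2 ^ k} =>
                  depth u.1 / 2 ^ l = d),
                (D (d * 2 ^ l + 2 ^ (l - 1)) + D (d * 2 ^ l + 2 ^ l)) := by
                apply Finset.sum_congr rfl
                intro u hu
                simp only [Finset.mem_filter, Finset.mem_univ, true_and] at hu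
                rw [hdepths u hu]
            _ = D (d * 2 ^ l) * (D (d * 2 ^ l + 2 ^ (l - 1)) + D (d * 2 ^ l + 2 ^ l)) := by
                rw [Finset.sum_const, hcard, smul_eq_mul]
  · -- Part 2
    have Dzero : ∀ j, 2 ^ k < j → D j = 0 := by
      intro j hj
      rw [hD, Finset.card_eq_zero, Finset.filter_eq_empty_iff]
      intro u _
      exact fun h => absurd (h ▸ hdepth u) (not_le.mpr hj)
    set T : ℕ → ℕ := fun g => ∑ i ∈ Finset.range (2 ^ k), D i * D (i + g) with hT
    have step1 : ∀ l ∈ Finset.Icc 1 k, ∀ g : ℕ,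
        ∑ d ∈ Finset.range (2 ^ (k - l)), D (d * 2 ^ l) * D (d * 2 ^ l + g) ≤ T g := by
      intro l hl g
      have hlk : l ≤ k := (Finset.mem_Icc.mp hl).2
      have hinj : ∀ a ∈ Finset.range (2 ^ (k - l)), ∀ b ∈ Finset.range (2 ^ (k - l)),
          a * 2 ^ l = b * 2 ^ l → a = b := by
        intro a _ b _ h
        exact Nat.eq_of_mul_eq_mul_right (pow_pos two_pos l) h
      calc ∑ d ∈ Finset.range (2 ^ (k - l)), D (d * 2 ^ l) * D (d * 2 ^ l + g)
          = ∑ i ∈ (Finset.range (2 ^ (k - l))).image (fun d => d * 2 ^ l),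
              D i * D (i + g) :=
            (Finset.sum_image (f := fun i => D i * D (i + g)) hinj).symm
        _ ≤ T g := by
            apply Finset.sum_le_sum_of_subset
            intro i hi
            simp only [Finset.mem_image, Finset.mem_range] at hi ⊢
            obtain ⟨d, hd, rfl⟩ := hi
            rw [← hpow l hlk]
            exact (Nat.mul_lt_mul_right (pow_pos two_pos l)).mpr hd
    have step2 : ∀ f : ℕ → ℕ, (∀ l ∈ Finset.Icc 1 k, 1 ≤ f l ∧ f l ≤ 2 ^ k) →
        (∀ a ∈ Finset.Icc 1 k, ∀ b ∈ Finset.Icc 1 k, f a = f b → a = b) →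
        ∑ l ∈ Finset.Icc 1 k, T (f l) ≤ ∑ m ∈ Finset.Icc 1 (2 ^ k), T m := by
      intro f hrange hinj
      calc ∑ l ∈ Finset.Icc 1 k, T (f l)
          = ∑ m ∈ (Finset.Icc 1 k).image f, T m := (Finset.sum_image hinj).symm
        _ ≤ ∑ m ∈ Finset.Icc 1 (2 ^ k), T m := by
            apply Finset.sum_le_sum_of_subset
            intro m hm
            simp only [Finset.mem_image] at hm
            obtain ⟨l, hl, rfl⟩ := hm
            exact Finset.mem_Icc.mpr ⟨(hrange l hl).1, (hrange l hl).2⟩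
    have hmono : ∀ l ∈ Finset.Icc 1 k, ∀ e : ℕ, e ≤ k → (1 : ℕ) ≤ 2 ^ e ∧ 2 ^ e ≤ 2 ^ k :=
      fun l _ e he => ⟨Nat.one_le_two_pow, Nat.pow_le_pow_right (by norm_num) he⟩
    have hstep2a : ∑ l ∈ Finset.Icc 1 k, T (2 ^ (l - 1)) ≤ ∑ m ∈ Finset.Icc 1 (2 ^ k), T m := by
      apply step2
      · intro l hl
        exact hmono l hl (l - 1) (le_trans (Nat.sub_le l 1) (Finset.mem_Icc.mp hl).2)
      · intro a ha b hb h
        have := Nat.pow_right_injective (le_refl 2) h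
        have ha1 := (Finset.mem_Icc.mp ha).1
        have hb1 := (Finset.mem_Icc.mp hb).1
        omega
    have hstep2b : ∑ l ∈ Finset.Icc 1 k, T (2 ^ l) ≤ ∑ m ∈ Finset.Icc 1 (2 ^ k), T m := by
      apply step2
      · intro l hl
        exact hmono l hl l (Finset.mem_Icc.mp hl).2
      · intro a ha b hb h
        exact Nat.pow_right_injective (le_refl 2) h
    have step3 : ∑ m ∈ Finset.Icc 1 (2 ^ k), T m
        ≤ ∑ i ∈ Finset.range (2 ^ k + 1), ∑ j ∈ Finset.range (2 ^ k + 1),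
            (if i < j then D i * D j else 0) := by
      rw [hT]
      simp only []
      rw [Finset.sum_comm]
      have hinner : ∀ i ∈ Finset.range (2 ^ k),
          ∑ m ∈ Finset.Icc 1 (2 ^ k), D i * D (i + m)
          = ∑ j ∈ Finset.range (2 ^ k + 1), (if i < j then D i * D j else 0) := by
        intro i _
        have h1 : ∑ m ∈ Finset.Icc 1 (2 ^ k), D i * D (i + m)
            = ∑ j ∈ Finset.Icc (i + 1) (i + 2 ^ k), D i * D j := by
          rw [← Finset.map_add_left_Icc 1 (2 ^ k) i, Finset.sum_map]
          simp [addLeftEmbedding]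
        have h2 : ∑ j ∈ Finset.Icc (i + 1) (i + 2 ^ k), D i * D j
            = ∑ j ∈ Finset.Icc (i + 1) (2 ^ k), D i * D j := by
          apply (Finset.sum_subset _ _).symm
          · apply Finset.Icc_subset_Icc_right
            exact Nat.le_add_left _ _
          · intro j hj hnj
            simp only [Finset.mem_Icc] at hj hnj
            have : 2 ^ k < j := by omega
            rw [Dzero j this, mul_zero]
        have h3 : ∑ j ∈ Finset.Icc (i + 1) (2 ^ k), D i * D j
            = ∑ j ∈ Finset.range (2 ^ k + 1), (if i < j then D i * D j else 0) := by
          rw [show Finset.Icc (i + 1) (2 ^ k)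
              = (Finset.range (2 ^ k + 1)).filter (fun j => i < j) from by
            ext j
            simp only [Finset.mem_Icc, Finset.mem_filter, Finset.mem_range]
            omega]
          rw [Finset.sum_filter]
        rw [h1, h2, h3]
      rw [Finset.sum_congr rfl hinner]
      apply Finset.sum_le_sum_of_subset
      intro i hi
      simp only [Finset.mem_range] at hi ⊢
      omega
    calc (∑ l ∈ Finset.Icc 1 k, ∑ d ∈ Finset.range (2 ^ (k - l)),
          D (d * 2 ^ l) * (D (d * 2 ^ l + 2 ^ (l - 1)) + D (d * 2 ^ l + 2 ^ l)))
        ≤ ∑ l ∈ Finset.Icc 1 k, (T (2 ^ (l - 1)) + T (2 ^ l)) := by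
          apply Finset.sum_le_sum
          intro l hl
          have : ∀ d, D (d * 2 ^ l) * (D (d * 2 ^ l + 2 ^ (l - 1)) + D (d * 2 ^ l + 2 ^ l))
              = D (d * 2 ^ l) * D (d * 2 ^ l + 2 ^ (l - 1))
                + D (d * 2 ^ l) * D (d * 2 ^ l + 2 ^ l) := fun d => by ring
          simp only [this]
          rw [Finset.sum_add_distrib]
          exact add_le_add (step1 l hl _) (step1 l hl _)
      _ = (∑ l ∈ Finset.Icc 1 k, T (2 ^ (l - 1))) + ∑ l ∈ Finset.Icc 1 k, T (2 ^ l) :=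
          Finset.sum_add_distrib
      _ ≤ 2 * ∑ m ∈ Finset.Icc 1 (2 ^ k), T m := by
          rw [two_mul]; exact add_le_add hstep2a hstep2b
      _ ≤ 2 * ∑ i ∈ Finset.range (2 ^ k + 1), ∑ j ∈ Finset.range (2 ^ k + 1),
            (if i < j then D i * D j else 0) := by
          exact Nat.mul_le_mul_left 2 step3
      _ ≤ (∑ i ∈ Finset.range (2 ^ k + 1), D i) ^ 2 := aux_pairs D (2 ^ k + 1)
end

section
/- For k ≥ 7, the number of nodes in the quasi-reduced BDD B(f_k) is exactly (21/2)·2^k − 6k − 8; in particular, |B(f_k)| = Θ(2^k). -/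
namespace FkBDD

/-- The union of the three "left" comparison blocks. Position `q` in this set
is compared with position `q + k`. -/
def Ablocks (k : ℕ) : Finset ℕ :=
  Finset.Ico (2 ^ (k - 1) - k) (2 ^ (k - 1)) ∪
  Finset.Ico (5 * 2 ^ k / 8 - k) (5 * 2 ^ k / 8) ∪
  Finset.Ico (3 * 2 ^ k / 4 - k) (3 * 2 ^ k / 4)

/-- The function `f_k` as a function on total assignments. -/
def Fk (k : ℕ) (X : ℕ → Bool) : Bool := decide (∀ q ∈ Ablocks k, X q = X (q + k))

/-- Combine a prefix assignment and a suffix assignment into a total one. -/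
def comb (m d : ℕ) (a : Fin d → Bool) (y : Fin (m - d) → Bool) : ℕ → Bool :=
  fun i => if h : i < d then a ⟨i, h⟩
           else if h' : i - d < m - d then y ⟨i - d, h'⟩ else false

/-- Pending comparison positions at depth `d`: fixed, but partner not yet fixed. -/
def Pend (k d : ℕ) : Finset ℕ := (Ablocks k).filter (fun q => q < d ∧ d ≤ q + k)

lemma mem_Ablocks {k q : ℕ} : q ∈ Ablocks k ↔
    (2 ^ (k - 1) - k ≤ q ∧ q < 2 ^ (k - 1)) ∨
    (5 * 2 ^ k / 8 - k ≤ q ∧ q < 5 * 2 ^ k / 8) ∨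
    (3 * 2 ^ k / 4 - k ≤ q ∧ q < 3 * 2 ^ k / 4) := by
  simp [Ablocks, Finset.mem_union, Finset.mem_Ico, or_assoc]

lemma mem_Pend {k d q : ℕ} : q ∈ Pend k d ↔ q ∈ Ablocks k ∧ q < d ∧ d ≤ q + k := by
  simp [Pend, Finset.mem_filter]

lemma aux_pow (n : ℕ) : 2 * (n + 7) ≤ 2 ^ (n + 4) := by
  induction n with
  | zero => norm_num
  | succ n ih =>
      have h1 : (2:ℕ) ≤ 2 ^ (n + 4) := by
        calc (2:ℕ) ≤ 2 ^ 1 := by norm_num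
        _ ≤ 2 ^ (n + 4) := Nat.pow_le_pow_right (by norm_num) (by omega)
      have : (2:ℕ) ^ (n + 1 + 4) = 2 * 2 ^ (n + 4) := by ring
      omega

lemma facts (k : ℕ) (hk : 7 ≤ k) :
    2 * k ≤ 2 ^ (k - 3) ∧ 2 ^ k = 8 * 2 ^ (k - 3) ∧ 2 ^ (k - 1) = 4 * 2 ^ (k - 3) := by
  obtain ⟨n, rfl⟩ : ∃ n, k = n + 7 := ⟨k - 7, by omega⟩
  refine ⟨by simpa using aux_pow n, ?_, ?_⟩
  · show (2:ℕ) ^ (n + 7) = 8 * 2 ^ (n + 4); ring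
  · show (2:ℕ) ^ (n + 6) = 4 * 2 ^ (n + 4); ring

lemma fk_eq_F (k : ℕ) (hk : 7 ≤ k) (X : Fin (2 ^ k) → Bool) :
    fk k X = Fk k (fun i => if h : i < 2 ^ k then X ⟨i, h⟩ else false) := by
  obtain ⟨hE, hm, h1⟩ := facts k hk
  unfold fk Fk
  set X' : ℕ → Bool := fun i => if h : i < 2 ^ k then X ⟨i, h⟩ else false with hX'
  apply decide_eq_decide.mpr
  constructor
  · rintro ⟨c1, c2, c3⟩ q hq
    rw [mem_Ablocks] at hq
    rcases hq with h | h | h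
    · have hj : q - (2 ^ (k - 1) - k) < k := by omega
      have := c1 _ hj
      rwa [show 2 ^ (k - 1) - k + (q - (2 ^ (k - 1) - k)) = q by omega,
        show 2 ^ (k - 1) + (q - (2 ^ (k - 1) - k)) = q + k by omega] at this
    · have hj : q - (5 * 2 ^ k / 8 - k) < k := by omega
      have := c2 _ hj
      rwa [show 5 * 2 ^ k / 8 - k + (q - (5 * 2 ^ k / 8 - k)) = q by omega,
        show 5 * 2 ^ k / 8 + (q - (5 * 2 ^ k / 8 - k)) = q + k by omega] at this
    · have hj : q - (3 * 2 ^ k / 4 - k) < k := by omega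
      have := c3 _ hj
      rwa [show 3 * 2 ^ k / 4 - k + (q - (3 * 2 ^ k / 4 - k)) = q by omega,
        show 3 * 2 ^ k / 4 + (q - (3 * 2 ^ k / 4 - k)) = q + k by omega] at this
  · intro h
    refine ⟨fun j hj => ?_, fun j hj => ?_, fun j hj => ?_⟩
    · have := h (2 ^ (k - 1) - k + j) (by rw [mem_Ablocks]; left; omega)
      rwa [show 2 ^ (k - 1) - k + j + k = 2 ^ (k - 1) + j by omega] at this
    · have := h (5 * 2 ^ k / 8 - k + j) (by rw [mem_Ablocks]; right; left; omega)
      rwa [show 5 * 2 ^ k / 8 - k + j + k = 5 * 2 ^ k / 8 + j by omega] at this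
    · have := h (3 * 2 ^ k / 4 - k + j) (by rw [mem_Ablocks]; right; right; omega)
      rwa [show 3 * 2 ^ k / 4 - k + j + k = 3 * 2 ^ k / 4 + j by omega] at this

lemma residual_eq (k d : ℕ) (hk : 7 ≤ k) (hd : d ≤ 2 ^ k) :
    residualSet (2 ^ k) (fk k) d =
      Set.range (fun a : Fin d → Bool => fun y => Fk k (comb (2 ^ k) d a y)) := by
  have key : ∀ (a : Fin d → Bool) (y : Fin (2 ^ k - d) → Bool),
      fk k (fun i : Fin (2 ^ k) => if h : (i : ℕ) < d then a ⟨i, h⟩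
        else y ⟨(i : ℕ) - d, by have := i.2; omega⟩) = Fk k (comb (2 ^ k) d a y) := by
    intro a y
    rw [fk_eq_F k hk]
    congr 1
    funext i
    by_cases h1 : i < 2 ^ k
    · rw [dif_pos h1]
      by_cases h2 : i < d
      · rw [dif_pos h2]; unfold comb; rw [dif_pos h2]
      · rw [dif_neg h2]; unfold comb
        rw [dif_neg h2, dif_pos (show i - d < 2 ^ k - d by omega)]
    · rw [dif_neg h1]; unfold comb
      rw [dif_neg (show ¬ i < d by omega), dif_neg (show ¬ (i - d < 2 ^ k - d) by omega)]
  ext g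
  simp only [residualSet, Set.mem_setOf_eq, Set.mem_range]
  constructor
  · rintro ⟨a, rfl⟩; exact ⟨a, by funext y; exact (key a y).symm⟩
  · rintro ⟨a, rfl⟩; exact ⟨a, by funext y; exact (key a y).symm⟩

lemma ncard_residual (k d : ℕ) (hk : 7 ≤ k) (hd : d ≤ 2 ^ k) :
    (residualSet (2 ^ k) (fk k) d).ncard =
      (Finset.univ.image
        (fun a : Fin d → Bool => fun y : Fin (2 ^ k - d) → Bool =>
          Fk k (comb (2 ^ k) d a y))).card := by
  classical
  rw [residual_eq k d hk hd, ← Set.ncard_coe_finset]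
  congr 1
  rw [Finset.coe_image, Finset.coe_univ, Set.image_univ]

theorem image_card_sig {α β S : Type*} [Fintype α] [DecidableEq β] [Fintype S]
    [DecidableEq S] (r : α → β) (s : α → S) (hs : Function.Surjective s)
    (h : ∀ a a', r a = r a' ↔ s a = s a') :
    (Finset.univ.image r).card = Fintype.card S := by
  classical
  rw [← Finset.card_univ]
  refine Finset.card_bij (fun b hb => s (Finset.mem_image.mp hb).choose)
    (fun _ _ => Finset.mem_univ _) ?_ ?_
  · intro b1 h1 b2 h2 heq
    have e1 := (Finset.mem_image.mp h1).choose_spec.2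
    have e2 := (Finset.mem_image.mp h2).choose_spec.2
    rw [← e1, ← e2]
    exact (h _ _).mpr heq
  · intro c _
    obtain ⟨a, ha⟩ := hs c
    have hmem : r a ∈ Finset.univ.image r :=
      Finset.mem_image.mpr ⟨a, Finset.mem_univ a, rfl⟩
    refine ⟨r a, hmem, ?_⟩
    show s (Finset.mem_image.mp hmem).choose = c
    rw [(h _ _).mp (Finset.mem_image.mp hmem).choose_spec.2, ha]

/-- A prefix is "dead" if some already-completed comparison fails. -/
def deadP (k d : ℕ) (a : Fin d → Bool) : Prop :=
  ∃ q, ∃ _ : q ∈ Ablocks k, ∃ h2 : q + k < d,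
    a ⟨q, by omega⟩ ≠ a ⟨q + k, h2⟩

/-- The live signature: values at pending positions. -/
def sigL (k d : ℕ) (a : Fin d → Bool) : {q // q ∈ Pend k d} → Bool :=
  fun q => a ⟨q.1, (Finset.mem_filter.mp q.2).2.1⟩

/-- Witness suffix (on ℕ): copy pending values to their partners, else false. -/
def ywitN (k d : ℕ) (a : Fin d → Bool) : ℕ → Bool :=
  fun t => if h : (t + d - k ∈ Ablocks k) ∧ t + d - k < d ∧ k ≤ t + d then
    a ⟨t + d - k, h.2.1⟩ else false

def ywit (k d : ℕ) (a : Fin d → Bool) : Fin (2 ^ k - d) → Bool :=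
  fun t => ywitN k d a t.1

theorem card_key (k d : ℕ) (hk : 7 ≤ k) (hd : d ≤ 2 ^ k) :
    (residualSet (2 ^ k) (fk k) d).ncard =
      2 ^ (Pend k d).card + (if 2 ^ (k - 1) < d then 1 else 0) := by
  classical
  obtain ⟨hE, hm, h1⟩ := facts k hk
  rw [ncard_residual k d hk hd]
  set r := fun a : Fin d → Bool => fun y : Fin (2 ^ k - d) → Bool =>
    Fk k (comb (2 ^ k) d a y) with hr
  -- basic position facts
  have A_sub : ∀ q ∈ Ablocks k, k ≤ q ∧ q + k < 2 ^ k := by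
    intro q hq; rw [mem_Ablocks] at hq; omega
  have A_shift : ∀ q ∈ Ablocks k, q - k ∉ Ablocks k := by
    intro q hq hq'; rw [mem_Ablocks] at hq hq'; omega
  have A_pair : ∀ q ∈ Ablocks k, q + k ∉ Ablocks k := by
    intro q hq hq'; rw [mem_Ablocks] at hq hq'; omega
  -- comb evaluation
  have comb_lt : ∀ (a : Fin d → Bool) (y) (i : ℕ) (h : i < d),
      comb (2 ^ k) d a y i = a ⟨i, h⟩ := by
    intro a y i h; unfold comb; rw [dif_pos h]
  have comb_ge : ∀ (a : Fin d → Bool) (y) (i : ℕ) (h : d ≤ i) (h2 : i < 2 ^ k),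
      comb (2 ^ k) d a y i = y ⟨i - d, by omega⟩ := by
    intro a y i h h2; unfold comb
    rw [dif_neg (by omega), dif_pos (by omega)]
  have Fk_iff : ∀ X, Fk k X = true ↔ ∀ q ∈ Ablocks k, X q = X (q + k) := by
    intro X
    show decide _ = true ↔ _
    exact decide_eq_true_iff
  have Fk_false : ∀ X, Fk k X = false ↔ ¬ ∀ q ∈ Ablocks k, X q = X (q + k) := by
    intro X
    show decide _ = false ↔ _
    exact decide_eq_false_iff_not
  -- evaluating the witness suffix
  have comb_ywit : ∀ (a a'' : Fin d → Bool) (i : ℕ) (h : d ≤ i) (h2 : i < 2 ^ k),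
      comb (2 ^ k) d a'' (ywit k d a) i = ywitN k d a (i - d) := by
    intro a a'' i h h2; rw [comb_ge a'' _ i h h2]; rfl
  have ywit_pend : ∀ (a : Fin d → Bool) (q : ℕ) (_ : q ∈ Ablocks k)
      (hq1 : q < d) (_ : d ≤ q + k), ywitN k d a (q + k - d) = a ⟨q, hq1⟩ := by
    intro a q hqA hq1 hq2
    unfold ywitN
    have e : q + k - d + d - k = q := by omega
    rw [dif_pos (show q + k - d + d - k ∈ Ablocks k ∧ q + k - d + d - k < d ∧
        k ≤ q + k - d + d from ⟨by rw [e]; exact hqA, by omega, by omega⟩)]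
    exact congrArg a (Fin.ext e)
  have ywit_freeL : ∀ (a : Fin d → Bool) (q : ℕ) (_ : q ∈ Ablocks k)
      (_ : d ≤ q), ywitN k d a (q - d) = false := by
    intro a q hqA hq1
    have hkq := (A_sub q hqA).1
    unfold ywitN
    rw [dif_neg]
    rintro ⟨hmem, -, -⟩
    rw [show q - d + d - k = q - k by omega] at hmem
    exact A_shift q hqA hmem
  have ywit_freeR : ∀ (a : Fin d → Bool) (q : ℕ) (_ : q ∈ Ablocks k)
      (_ : d ≤ q), ywitN k d a (q + k - d) = false := by
    intro a q hqA hq1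
    unfold ywitN
    rw [dif_neg]
    rintro ⟨-, hlt, -⟩
    omega
  -- master lemmas
  have live_true : ∀ a, ¬ deadP k d a → r a (ywit k d a) = true := by
    intro a hnd
    show Fk k (comb (2 ^ k) d a (ywit k d a)) = true
    rw [Fk_iff _]
    intro q hq
    obtain ⟨hkq, hq2⟩ := A_sub q hq
    by_cases hc1 : q + k < d
    · rw [comb_lt a _ q (by omega), comb_lt a _ (q + k) hc1]
      by_contra hne
      exact hnd ⟨q, hq, hc1, hne⟩
    · by_cases hc2 : q < d
      · rw [comb_lt a _ q hc2, comb_ywit a a (q + k) (by omega) hq2,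
          ywit_pend a q hq hc2 (by omega)]
      · rw [comb_ywit a a q (by omega) (by omega),
          comb_ywit a a (q + k) (by omega) hq2,
          ywit_freeL a q hq (by omega), ywit_freeR a q hq (by omega)]
  have dead_false : ∀ a y, deadP k d a → r a y = false := by
    intro a y hdead
    obtain ⟨q, hq, h2, hne⟩ := hdead
    show Fk k (comb (2 ^ k) d a y) = false
    rw [Fk_false _]
    intro hall
    have := hall q hq
    rw [comb_lt a y q (by omega), comb_lt a y (q + k) h2] at this
    exact hne this
  have M1 : ∀ a a', ¬ deadP k d a → ¬ deadP k d a' → sigL k d a = sigL k d a' →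
      r a = r a' := by
    intro a a' hna hna' hsig
    funext y
    have half : ∀ (b b' : Fin d → Bool), ¬ deadP k d b' → sigL k d b = sigL k d b' →
        ((∀ q ∈ Ablocks k, comb (2^k) d b y q = comb (2^k) d b y (q+k)) →
         (∀ q ∈ Ablocks k, comb (2^k) d b' y q = comb (2^k) d b' y (q+k))) := by
      intro b b' hnb' hs hyp q hq
      obtain ⟨hkq, hq2⟩ := A_sub q hq
      by_cases hc1 : q + k < d
      · rw [comb_lt b' y q (by omega), comb_lt b' y (q + k) hc1]
        by_contra hne
        exact hnb' ⟨q, hq, hc1, hne⟩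
      · by_cases hc2 : q < d
        · have hqP : q ∈ Pend k d := mem_Pend.mpr ⟨hq, hc2, by omega⟩
          have hbv : b ⟨q, hc2⟩ = b' ⟨q, hc2⟩ := congrFun hs ⟨q, hqP⟩
          have hthis := hyp q hq
          rw [comb_lt b y q hc2, comb_ge b y (q+k) (by omega) hq2] at hthis
          rw [comb_lt b' y q hc2, comb_ge b' y (q+k) (by omega) hq2, ← hbv, hthis]
        · have hthis := hyp q hq
          rw [comb_ge b y q (by omega) (by omega),
            comb_ge b y (q+k) (by omega) hq2] at hthis
          rw [comb_ge b' y q (by omega) (by omega),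
            comb_ge b' y (q+k) (by omega) hq2]
          exact hthis
    show Fk k (comb (2^k) d a y) = Fk k (comb (2^k) d a' y)
    by_cases hb : Fk k (comb (2^k) d a y) = true
    · rw [hb, (Fk_iff _).mpr (half a a' hna' hsig ((Fk_iff _).mp hb))]
    · have hbf : Fk k (comb (2^k) d a y) = false := by
        cases h : Fk k (comb (2^k) d a y) with
        | false => rfl
        | true => exact absurd h hb
      by_cases hb' : Fk k (comb (2^k) d a' y) = true
      · exfalso
        have hfa := half a' a hna hsig.symm ((Fk_iff _).mp hb')
        exact ((Fk_false _).mp hbf) hfa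
      · have hbf' : Fk k (comb (2^k) d a' y) = false := by
          cases h : Fk k (comb (2^k) d a' y) with
          | false => rfl
          | true => exact absurd h hb'
        rw [hbf, hbf']
  have M2 : ∀ a a', deadP k d a → deadP k d a' → r a = r a' := by
    intro a a' ha ha'
    funext y
    rw [dead_false a y ha, dead_false a' y ha']
  have distL : ∀ a a', ¬ deadP k d a → sigL k d a ≠ sigL k d a' →
      r a' (ywit k d a) = false := by
    intro a a' hna hsig
    by_cases hna' : deadP k d a'
    · exact dead_false a' _ hna'
    · obtain ⟨q0, hq0⟩ := Function.ne_iff.mp hsig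
      have hq0P := q0.2
      rw [mem_Pend] at hq0P
      obtain ⟨hq0A, hq0d, hq0k⟩ := hq0P
      have hq02 := (A_sub q0.1 hq0A).2
      show Fk k (comb (2 ^ k) d a' (ywit k d a)) = false
      rw [Fk_false _]
      intro hall
      have hthis := hall q0.1 hq0A
      rw [comb_lt a' _ q0.1 hq0d, comb_ywit a a' (q0.1 + k) (by omega) hq02,
        ywit_pend a q0.1 hq0A hq0d hq0k] at hthis
      exact hq0 hthis.symm
  have M3 : ∀ a a', ¬ deadP k d a → sigL k d a ≠ sigL k d a' → r a ≠ r a' := by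
    intro a a' hna hsig heq
    have h1' := live_true a hna
    have h2' := distL a a' hna hsig
    rw [← heq, h1'] at h2'
    exact Bool.noConfusion h2'
  have M4 : ∀ a a', ¬ deadP k d a → deadP k d a' → r a ≠ r a' := by
    intro a a' hna ha' heq
    have h1' := live_true a hna
    have h2' := dead_false a' (ywit k d a) ha'
    rw [← heq, h1'] at h2'
    exact Bool.noConfusion h2'
  by_cases hp1 : 2 ^ (k - 1) < d
  · rw [if_pos hp1]
    have nodead_some : ∀ v : {q // q ∈ Pend k d} → Bool,
        ¬ deadP k d (fun i => if h : i.1 ∈ Pend k d then v ⟨i.1, h⟩ else false) := by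
      intro v hv
      obtain ⟨q, hq, h2, hne⟩ := hv
      apply hne
      have hqn : q ∉ Pend k d := by
        simp only [mem_Pend, not_and]; intro _ _; omega
      have hqn' : q + k ∉ Pend k d := by
        simp only [mem_Pend, not_and]
        intro hmem
        exact absurd hmem (A_pair q hq)
      show (if h : q ∈ Pend k d then v ⟨q, h⟩ else false)
          = (if h : q + k ∈ Pend k d then v ⟨q + k, h⟩ else false)
      rw [dif_neg hqn, dif_neg hqn']
    set s : (Fin d → Bool) → Option ({q // q ∈ Pend k d} → Bool) :=
      fun a => if deadP k d a then none else some (sigL k d a) with hs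
    have hsurj : Function.Surjective s := by
      rintro (_ | v)
      · refine ⟨fun i => decide (i.1 = 2 ^ (k - 1)), ?_⟩
        have hdead : deadP k d (fun i : Fin d => decide (i.1 = 2 ^ (k - 1))) := by
          refine ⟨2 ^ (k - 1) - k, by rw [mem_Ablocks]; left; omega, by omega, ?_⟩
          simp only [ne_eq, decide_eq_decide]
          omega
        simp only [hs, if_pos hdead]
      · refine ⟨fun i => if h : i.1 ∈ Pend k d then v ⟨i.1, h⟩ else false, ?_⟩
        simp only [hs, if_neg (nodead_some v)]
        congr 1
        funext q
        show (if h : q.1 ∈ Pend k d then v ⟨q.1, h⟩ else false) = v q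
        rw [dif_pos q.2]
    have hiff : ∀ a a', r a = r a' ↔ s a = s a' := by
      intro a a'
      simp only [hs]
      by_cases ha : deadP k d a <;> by_cases ha' : deadP k d a'
      · simp only [if_pos ha, if_pos ha']
        exact ⟨fun _ => by trivial, fun _ => M2 a a' ha ha'⟩
      · simp only [if_pos ha, if_neg ha']
        constructor
        · intro h; exact absurd h.symm (M4 a' a ha' ha)
        · intro h; exact absurd h (by simp)
      · simp only [if_neg ha, if_pos ha']
        constructor
        · intro h; exact absurd h (M4 a a' ha ha')
        · intro h; exact absurd h (by simp)
      · simp only [if_neg ha, if_neg ha']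
        constructor
        · intro h
          by_contra hne
          have hne' : sigL k d a ≠ sigL k d a' := by
            intro hx; exact hne (by rw [hx])
          exact M3 a a' ha hne' h
        · intro h
          exact M1 a a' ha ha' (Option.some_injective _ h)
    rw [image_card_sig r s hsurj hiff]
    rw [Fintype.card_option, Fintype.card_fun, Fintype.card_coe, Fintype.card_bool]
  · rw [if_neg hp1]
    have nodead : ∀ a, ¬ deadP k d a := by
      intro a ha
      obtain ⟨q, hq, h2, -⟩ := ha
      rw [mem_Ablocks] at hq
      omega
    have hsurj : Function.Surjective (sigL k d) := by
      intro v
      refine ⟨fun i => if h : i.1 ∈ Pend k d then v ⟨i.1, h⟩ else false, ?_⟩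
      funext q
      show (if h : q.1 ∈ Pend k d then v ⟨q.1, h⟩ else false) = v q
      rw [dif_pos q.2]
    have hiff : ∀ a a', r a = r a' ↔ sigL k d a = sigL k d a' := by
      intro a a'
      constructor
      · intro h
        by_contra hne
        exact M3 a a' (nodead a) hne h
      · intro h; exact M1 a a' (nodead a) (nodead a') h
    rw [image_card_sig r (sigL k d) hsurj hiff]
    rw [Fintype.card_fun, Fintype.card_coe, Fintype.card_bool, Nat.add_zero]

lemma twoPowSum (n : ℕ) : ∑ j ∈ Finset.range n, 2 ^ j = 2 ^ n - 1 := by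
  induction n with
  | zero => simp
  | succ n ih =>
    rw [Finset.sum_range_succ, ih]
    have h1 : 1 ≤ 2 ^ n := Nat.one_le_two_pow
    have h2 : 2 ^ (n + 1) = 2 * 2 ^ n := by ring
    omega

lemma sumUp (c n : ℕ) : ∑ d ∈ Finset.Ico (c + 1) (c + n + 1), 2 ^ (d - c) = 2 ^ (n + 1) - 2 := by
  rw [Finset.sum_Ico_eq_sum_range, show c + n + 1 - (c + 1) = n by omega]
  have h : ∀ j ∈ Finset.range n, 2 ^ (c + 1 + j - c) = 2 * 2 ^ j := by
    intro j _; rw [show c + 1 + j - c = j + 1 by omega]; ring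
  rw [Finset.sum_congr rfl h, ← Finset.mul_sum, twoPowSum]
  have h1 : 1 ≤ 2 ^ n := Nat.one_le_two_pow
  have h2 : 2 ^ (n + 1) = 2 * 2 ^ n := by ring
  omega

lemma sumDown (c n : ℕ) : ∑ d ∈ Finset.Ico (c + 1) (c + n + 1), 2 ^ (c + n - d) = 2 ^ n - 1 := by
  rw [Finset.sum_Ico_eq_sum_range, show c + n + 1 - (c + 1) = n by omega]
  have h : ∀ j ∈ Finset.range n, 2 ^ (c + n - (c + 1 + j)) = 2 ^ (n - 1 - j) := by
    intro j _; rw [show c + n - (c + 1 + j) = n - 1 - j by omega]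
  rw [Finset.sum_congr rfl h, Finset.sum_range_reflect (fun j => 2 ^ j) n, twoPowSum]

theorem sum_key (k : ℕ) (hk : 7 ≤ k) :
    (∑ d ∈ Finset.range (2 ^ k + 1),
      (2 ^ (Pend k d).card + (if 2 ^ (k - 1) < d then 1 else 0)))
    = 21 * 2 ^ (k - 1) - 6 * k - 8 := by
  obtain ⟨hE, hm, h1⟩ := facts k hk
  set E := 2 ^ (k - 3) with hEdef
  have hPcard : ∀ d lo hi, (∀ q, q ∈ Pend k d ↔ lo ≤ q ∧ q < hi) →
      (Pend k d).card = hi - lo := by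
    intro d lo hi h
    have he : Pend k d = Finset.Ico lo hi := by
      ext q; rw [h, Finset.mem_Ico]
    rw [he, Nat.card_Ico]
  have hPempty : ∀ d, (d ≤ 4 * E - k ∨ (4 * E + k < d ∧ d ≤ 5 * E - k) ∨
      (5 * E + k < d ∧ d ≤ 6 * E - k) ∨ 6 * E + k < d) → (Pend k d).card = 0 := by
    intro d hd
    have he : Pend k d = ∅ := by
      rw [Finset.eq_empty_iff_forall_notMem]
      intro q hq
      simp only [mem_Pend, mem_Ablocks] at hq
      omega
    rw [he, Finset.card_empty]
  set f : ℕ → ℕ := fun d => 2 ^ (Pend k d).card + (if 2 ^ (k - 1) < d then 1 else 0)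
    with hf
  have seg1 : ∑ d ∈ Finset.Ico 0 (4 * E - k + 1), f d = 4 * E - k + 1 := by
    have h : ∀ d ∈ Finset.Ico 0 (4 * E - k + 1), f d = 1 := by
      intro d hd; rw [Finset.mem_Ico] at hd
      show 2 ^ (Pend k d).card + (if 2 ^ (k - 1) < d then 1 else 0) = _
      rw [hPempty d (by omega), if_neg (by omega)]
      norm_num
    rw [Finset.sum_congr rfl h, Finset.sum_const, smul_eq_mul, mul_one, Nat.card_Ico]
    omega
  have segUp : ∀ P t, (P = 4 * E ∧ t = 0 ∨ P = 5 * E ∧ t = 1 ∨ P = 6 * E ∧ t = 1) →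
      ∑ d ∈ Finset.Ico (P - k + 1) (P + 1), f d = (2 ^ (k + 1) - 2) + k * t := by
    intro P t hP
    have h : ∀ d ∈ Finset.Ico (P - k + 1) (P + 1), f d = 2 ^ (d - (P - k)) + t := by
      intro d hd; rw [Finset.mem_Ico] at hd
      show 2 ^ (Pend k d).card + (if 2 ^ (k - 1) < d then 1 else 0) = _
      have hc : (Pend k d).card = d - (P - k) :=
        hPcard d (P - k) d (fun q => by simp only [mem_Pend, mem_Ablocks]; omega)
      rw [hc]
      rcases hP with ⟨rfl, rfl⟩ | ⟨rfl, rfl⟩ | ⟨rfl, rfl⟩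
      · rw [if_neg (by omega)]
      · rw [if_pos (by omega)]
      · rw [if_pos (by omega)]
    rw [Finset.sum_congr rfl h, Finset.sum_add_distrib, Finset.sum_const, smul_eq_mul,
      Nat.card_Ico]
    have e1 : P + 1 = (P - k) + k + 1 := by omega
    have e2 : P - k + 1 = (P - k) + 1 := rfl
    rw [e1, e2, sumUp (P - k) k]
    have e3 : P - k + k + 1 - (P - k + 1) = k := by omega
    rw [e3]
  have segDown : ∀ P : ℕ, (P = 4 * E ∨ P = 5 * E ∨ P = 6 * E) →
      ∑ d ∈ Finset.Ico (P + 1) (P + k + 1), f d = (2 ^ k - 1) + k := by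
    intro P hP
    have h : ∀ d ∈ Finset.Ico (P + 1) (P + k + 1), f d = 2 ^ (P + k - d) + 1 := by
      intro d hd; rw [Finset.mem_Ico] at hd
      show 2 ^ (Pend k d).card + (if 2 ^ (k - 1) < d then 1 else 0) = _
      have hc : (Pend k d).card = P - (d - k) :=
        hPcard d (d - k) P (fun q => by simp only [mem_Pend, mem_Ablocks]; omega)
      rw [hc, show P - (d - k) = P + k - d by omega, if_pos (by omega)]
    rw [Finset.sum_congr rfl h, Finset.sum_add_distrib, Finset.sum_const, smul_eq_mul,
      mul_one, Nat.card_Ico, sumDown P k, show P + k + 1 - (P + 1) = k by omega]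
  have segChain : ∀ lo hi, 4 * E + k < lo → (hi ≤ 5 * E - k + 1 ∨ (5 * E + k < lo ∧ hi ≤ 6 * E - k + 1) ∨ 6 * E + k < lo) →
      ∑ d ∈ Finset.Ico lo hi, f d = 2 * (hi - lo) := by
    intro lo hi hlo hhi
    have h : ∀ d ∈ Finset.Ico lo hi, f d = 2 := by
      intro d hd; rw [Finset.mem_Ico] at hd
      show 2 ^ (Pend k d).card + (if 2 ^ (k - 1) < d then 1 else 0) = _
      rw [hPempty d (by omega), if_pos (by omega)]
      norm_num
    rw [Finset.sum_congr rfl h, Finset.sum_const, smul_eq_mul, Nat.card_Ico]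
    omega
  rw [Finset.range_eq_Ico]
  rw [← Finset.sum_Ico_consecutive f (by omega : (0:ℕ) ≤ 4 * E - k + 1)
      (by omega : 4 * E - k + 1 ≤ 2 ^ k + 1)]
  rw [← Finset.sum_Ico_consecutive f (by omega : 4 * E - k + 1 ≤ 4 * E + 1)
      (by omega : 4 * E + 1 ≤ 2 ^ k + 1)]
  rw [← Finset.sum_Ico_consecutive f (by omega : 4 * E + 1 ≤ 4 * E + k + 1)
      (by omega : 4 * E + k + 1 ≤ 2 ^ k + 1)]
  rw [← Finset.sum_Ico_consecutive f (by omega : 4 * E + k + 1 ≤ 5 * E - k + 1)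
      (by omega : 5 * E - k + 1 ≤ 2 ^ k + 1)]
  rw [← Finset.sum_Ico_consecutive f (by omega : 5 * E - k + 1 ≤ 5 * E + 1)
      (by omega : 5 * E + 1 ≤ 2 ^ k + 1)]
  rw [← Finset.sum_Ico_consecutive f (by omega : 5 * E + 1 ≤ 5 * E + k + 1)
      (by omega : 5 * E + k + 1 ≤ 2 ^ k + 1)]
  rw [← Finset.sum_Ico_consecutive f (by omega : 5 * E + k + 1 ≤ 6 * E - k + 1)
      (by omega : 6 * E - k + 1 ≤ 2 ^ k + 1)]
  rw [← Finset.sum_Ico_consecutive f (by omega : 6 * E - k + 1 ≤ 6 * E + 1)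
      (by omega : 6 * E + 1 ≤ 2 ^ k + 1)]
  rw [← Finset.sum_Ico_consecutive f (by omega : 6 * E + 1 ≤ 6 * E + k + 1)
      (by omega : 6 * E + k + 1 ≤ 2 ^ k + 1)]
  rw [seg1,
    segUp (4*E) 0 (Or.inl ⟨rfl, rfl⟩),
    segDown (4*E) (Or.inl rfl),
    segChain (4*E+k+1) (5*E-k+1) (by omega) (Or.inl (by omega)),
    segUp (5*E) 1 (Or.inr (Or.inl ⟨rfl, rfl⟩)),
    segDown (5*E) (Or.inr (Or.inl rfl)),
    segChain (5*E+k+1) (6*E-k+1) (by omega) (Or.inr (Or.inl ⟨by omega, by omega⟩)),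
    segUp (6*E) 1 (Or.inr (Or.inr ⟨rfl, rfl⟩)),
    segDown (6*E) (Or.inr (Or.inr rfl)),
    segChain (6*E+k+1) (2^k+1) (by omega) (Or.inr (Or.inr (by omega)))]
  have h2k1 : 2 ^ (k + 1) = 16 * E := by rw [pow_succ, hm]; ring
  omega

end FkBDD

/-- The size of the quasi-reduced BDD for `f_k`: each node at depth `d`
corresponds to a distinct residual function obtained by fixing the first `d`
variables, so the node count is the sum over all depths of the number of
distinct residuals. It equals `(21/2)·2^k − 6k − 8`, hence is `Θ(2^k)`. -/
theorem fk_bdd_size (k : ℕ) (hk : 7 ≤ k) :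
    (∑ d ∈ Finset.range (2 ^ k + 1),
        (residualSet (2 ^ k) (fk k) d).ncard) = 21 * 2 ^ (k - 1) - 6 * k - 8 ∧
    2 ^ k ≤ (∑ d ∈ Finset.range (2 ^ k + 1),
        (residualSet (2 ^ k) (fk k) d).ncard) ∧
    (∑ d ∈ Finset.range (2 ^ k + 1),
        (residualSet (2 ^ k) (fk k) d).ncard) ≤ 11 * 2 ^ k := by
  have hs : (∑ d ∈ Finset.range (2 ^ k + 1),
      (residualSet (2 ^ k) (fk k) d).ncard) = 21 * 2 ^ (k - 1) - 6 * k - 8 := by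
    have hc : ∀ d ∈ Finset.range (2 ^ k + 1),
        (residualSet (2 ^ k) (fk k) d).ncard =
          2 ^ (FkBDD.Pend k d).card + (if 2 ^ (k - 1) < d then 1 else 0) := by
      intro d hd
      rw [Finset.mem_range] at hd
      exact FkBDD.card_key k d hk (by omega)
    rw [Finset.sum_congr rfl hc, FkBDD.sum_key k hk]
  obtain ⟨hE, hm, h1⟩ := FkBDD.facts k hk
  exact ⟨hs, by rw [hs]; omega, by rw [hs]; omega⟩
end
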